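/- For the chain with merged ring contacts (ℓ₂ = 0, ℓ₃ = 2π): if A − 1/2 is an integer, then for every positive integer n, at k = n − 1/2 one has a(k) = b(k) = c(k) = 0, for all ℓ₁ > 0 and all ℓ > 0; hence k² = (n − 1/2)² is a flat band. -/
import Mathlib


open Real

/-- The function `a` of the Floquet spectral condition of the magnetic ring
chain with merged ring contacts (`ℓ₂ = 0`, `ℓ₃ = 2π`), with vertex coupling
parameter `ℓ`, connecting-link length `ℓ₁`, and magnetic potential `A`. -/
noncomputable def mergedA (ℓ A k : ℝ) : ℝ :=
  2 * k * ℓ * Real.sin (2 * A * π) + (k ^ 2 * ℓ ^ 2 + 1) * Real.sin (2 * k * π)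

/-- The function `b` of the Floquet spectral condition of the merged-contacts chain. -/
noncomputable def mergedB (ℓ A k : ℝ) : ℝ :=
  2 * k * ℓ * (Real.cos (2 * A * π) - Real.cos (2 * k * π))

/-- The function `c` of the Floquet spectral condition of the merged-contacts chain. -/
noncomputable def mergedC (ℓ ℓ₁ A k : ℝ) : ℝ :=
  2 * k * ℓ * Real.sin (2 * A * π) * Real.cos (k * ℓ₁)
    - (k ^ 2 * ℓ ^ 2 + 1) * (Real.cos (2 * A * π) * Real.sin (k * ℓ₁)
      - Real.sin (k * (ℓ₁ + 2 * π)))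

lemma odd_mul_pi_sin (j : ℤ) : Real.sin ((2 * (j : ℝ) + 1) * π) = 0 := by
  have h := Real.sin_int_mul_pi (2 * j + 1)
  push_cast at h
  exact h

lemma odd_mul_pi_cos (j : ℤ) : Real.cos ((2 * (j : ℝ) + 1) * π) = -1 := by
  have : (2 * (j : ℝ) + 1) * π = (j : ℝ) * (2 * π) + π := by ring
  rw [this, Real.cos_add, Real.cos_int_mul_two_pi]
  have hs : Real.sin ((j : ℝ) * (2 * π)) = 0 := by
    have h := Real.sin_int_mul_pi (2 * j)
    push_cast at h
    rw [show (j : ℝ) * (2 * π) = 2 * (j:ℝ) * π by ring]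
    exact h
  rw [hs]
  simp

theorem stmt_10 (A : ℝ) (hA : ∃ m : ℤ, A - 1 / 2 = m) (n : ℕ) (hn : 0 < n)
    (k : ℝ) (hk : k = (n : ℝ) - 1 / 2) :
    ∀ ℓ₁ : ℝ, 0 < ℓ₁ → ∀ ℓ : ℝ, 0 < ℓ →
      mergedA ℓ A k = 0 ∧ mergedB ℓ A k = 0 ∧ mergedC ℓ ℓ₁ A k = 0 := by
  obtain ⟨m, hm⟩ := hA
  have hA2 : 2 * A * π = (2 * (m : ℝ) + 1) * π := by
    have : A = (m : ℝ) + 1 / 2 := by linarith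
    rw [this]; ring
  have hk2 : 2 * k * π = (2 * ((n : ℝ) - 1) + 1) * π := by rw [hk]; ring
  obtain ⟨n', rfl⟩ := Nat.exists_eq_succ_of_ne_zero hn.ne'
  have hk2' : 2 * k * π = (2 * ((n' : ℤ) : ℝ) + 1) * π := by
    rw [hk2]; push_cast; ring
  have hsA : Real.sin (2 * A * π) = 0 := by rw [hA2]; exact odd_mul_pi_sin m
  have hcA : Real.cos (2 * A * π) = -1 := by rw [hA2]; exact odd_mul_pi_cos m
  have hsk : Real.sin (2 * k * π) = 0 := by rw [hk2']; exact odd_mul_pi_sin n'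
  have hck : Real.cos (2 * k * π) = -1 := by rw [hk2']; exact odd_mul_pi_cos n'
  intro ℓ₁ _ ℓ _
  refine ⟨?_, ?_, ?_⟩
  · simp [mergedA, hsA, hsk]
  · simp [mergedB, hcA, hck]
  · have hshift : Real.sin (k * (ℓ₁ + 2 * π)) = -Real.sin (k * ℓ₁) := by
      have : k * (ℓ₁ + 2 * π) = k * ℓ₁ + 2 * k * π := by ring
      rw [this, Real.sin_add, hsk, hck]
      ring
    simp [mergedC, hsA, hcA, hshift]
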